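/- Let w ∈ W have an Ṡ_n-admissible presentation w = τ_{k_1}^{i_{k_1}}·τ_{k_2}^{i_{k_2}}⋯τ_{k_m}^{i_{k_m}}. For each 1 ≤ j ≤ m define i'_{k_j} = i_{k_j} if i_{k_j} ≥ 0, and i'_{k_j} = k_j + i_{k_j} if i_{k_j} < 0. Then w = t_{k_1}^{i'_{k_1}}·t_{k_2}^{i'_{k_2}}⋯t_{k_m}^{i'_{k_m}} in W. -/

import Mathlib

/-- The Coxeter matrix of type `Bₙ`, with the bond of order `4` between the
generators of indices `0` and `1` (the paper's convention): `s_i² = 1`,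
`(s_0·s_1)⁴ = 1`, `(s_i·s_{i+1})³ = 1` for `1 ≤ i ≤ n-2`, and `(s_i·s_j)² = 1`
for `|i-j| ≥ 2`. -/
def BCoxeterMatrix (n : ℕ) : CoxeterMatrix (Fin n) where
  M := Matrix.of fun i j : Fin n ↦
    if i = j then 1
      else if ((i : ℕ) = 0 ∧ (j : ℕ) = 1) ∨ ((j : ℕ) = 0 ∧ (i : ℕ) = 1) then 4
      else if (j : ℕ) + 1 = i ∨ (i : ℕ) + 1 = j then 3 else 2
  isSymm := by unfold Matrix.IsSymm; aesop
  diagonal := by simp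
  off_diagonal := by aesop

variable {n : ℕ} {W : Type*} [Group W]

/-- The simple reflection `s_j` of the Coxeter system, for `0 ≤ j ≤ n-1`
(junk value `1` for `j ≥ n`). -/
def sgen (cs : CoxeterSystem (BCoxeterMatrix n) W) (j : ℕ) : W :=
  if h : j < n then cs.simple ⟨j, h⟩ else 1

/-- `tau cs k` is the element `τ_k = s_0 · s_1 ⋯ s_{k-1}` (with `τ_0 = 1`). -/
def tau (cs : CoxeterSystem (BCoxeterMatrix n) W) (k : ℕ) : W :=
  ((List.range k).map (sgen cs)).prod

/-- An `Ṡ_n`-admissible presentation of `w ∈ W`: an expression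
`w = τ_{k_1}^{i_{k_1}} ⋯ τ_{k_m}^{i_{k_m}}` with `1 ≤ k_1 < ⋯ < k_m ≤ n` and
nonzero integers `i_{k_j}` such that `-k_j ≤ i_{k_j} ≤ k_j - 1` for all `j`,
`Σ_{j=1}^m i_{k_j} = 0`, and `0 ≤ Σ_{j=r}^m i_{k_j} ≤ k_{r-1}` for all `2 ≤ r ≤ m`. -/
structure IsAdmissible (cs : CoxeterSystem (BCoxeterMatrix n) W) (w : W)
    (m : ℕ) (k : Fin m → ℕ) (i : Fin m → ℤ) : Prop where
  one_le : ∀ j, 1 ≤ k j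
  le_n : ∀ j, k j ≤ n
  mono : StrictMono k
  ne_zero : ∀ j, i j ≠ 0
  lb : ∀ j, -(k j : ℤ) ≤ i j
  ub : ∀ j, i j ≤ (k j : ℤ) - 1
  total : ∑ j, i j = 0
  partialSum : ∀ r : ℕ, 1 ≤ r → ∀ hr : r < m,
    0 ≤ (∑ j ∈ Finset.univ.filter (fun j : Fin m => r ≤ (j : ℕ)), i j) ∧
    (∑ j ∈ Finset.univ.filter (fun j : Fin m => r ≤ (j : ℕ)), i j) ≤
      (k ⟨r - 1, Nat.lt_of_le_of_lt (Nat.sub_le r 1) hr⟩ : ℤ)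
  prod_eq : w = ((List.finRange m).map (fun j => tau cs (k j) ^ i j)).prod

/-- `tgen cs k` is the element `t_k = s_1 · s_2 ⋯ s_{k-1}`. -/
def tgen (cs : CoxeterSystem (BCoxeterMatrix n) W) (k : ℕ) : W :=
  ((List.range (k - 1)).map (fun j => sgen cs (j + 1))).prod

/-!
In the signed-permutation model of `W`, `τ_k = s_0 t_k` is the `k`-cycle `t_k` followed by a
sign change, and pushing it past the element `d_S` (`signFlips cs S`) that negates the first
`S < k` coordinates gives `τ_k d_S = d_{S+1} t_k`. Hence `τ_k^I d_S = d_{S+I} t_k^I` whenever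
`S` and `S + I` lie in `[0, k]`, and `t_k^I = t_k^{I'}` because `t_k^k = 1`. Admissibility
keeps the tail sums `Σ_{j ≥ r} i_{k_j}` and `Σ_{j > r} i_{k_j}` in `[0, k_r]`, so `d_{tail sum}`
can be pushed through the whole product from right to left, entering and leaving as `d_0 = 1`.
-/

section Generators

variable (cs : CoxeterSystem (BCoxeterMatrix n) W)

theorem sgen_mul_self (j : ℕ) : sgen cs j * sgen cs j = 1 := by
  unfold sgen; split
  · exact cs.simple_mul_simple_self _
  · simp

theorem sgen_mul_self_mul (j : ℕ) (g : W) : sgen cs j * (sgen cs j * g) = g := by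
  rw [← mul_assoc, sgen_mul_self, one_mul]

theorem sgen_commute {j l : ℕ} (h : j + 2 ≤ l) : Commute (sgen cs j) (sgen cs l) := by
  by_cases hl : l < n
  · have hM : ∀ a b : Fin n, (a = j ∧ b = l ∨ a = l ∧ b = j) →
        BCoxeterMatrix n a b = 2 := by
      intro a b hab
      simp only [BCoxeterMatrix, Matrix.of_apply, Fin.ext_iff]
      split_ifs <;> omega
    have := cs.wordProd_braidWord_eq ⟨j, by omega⟩ ⟨l, hl⟩
    rw [CoxeterSystem.braidWord, CoxeterSystem.braidWord, hM _ _ (.inl ⟨rfl, rfl⟩),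
      hM _ _ (.inr ⟨rfl, rfl⟩)] at this
    simpa [Commute, SemiconjBy, sgen, hl, show j < n by omega, CoxeterSystem.alternatingWord,
      CoxeterSystem.wordProd] using this
  · simp [sgen, hl]

theorem sgen_braid {j : ℕ} (h₁ : 1 ≤ j) (h₂ : j + 1 < n) :
    sgen cs j * sgen cs (j + 1) * sgen cs j = sgen cs (j + 1) * sgen cs j * sgen cs (j + 1) := by
  have hM : ∀ a b : Fin n, (a = j ∧ b = j + 1 ∨ a = j + 1 ∧ b = j) →
      BCoxeterMatrix n a b = 3 := by
    intro a b hab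
    simp only [BCoxeterMatrix, Matrix.of_apply, Fin.ext_iff]
    split_ifs <;> omega
  have := cs.wordProd_braidWord_eq ⟨j, by omega⟩ ⟨j + 1, h₂⟩
  rw [CoxeterSystem.braidWord, CoxeterSystem.braidWord, hM _ _ (.inl ⟨rfl, rfl⟩),
    hM _ _ (.inr ⟨rfl, rfl⟩)] at this
  simpa [sgen, h₂, show j < n by omega, CoxeterSystem.alternatingWord,
    CoxeterSystem.wordProd, mul_assoc] using this.symm

def sgenProd (a L : ℕ) : W := ((List.range L).map fun i => sgen cs (a + i)).prod

theorem sgenProd_zero (a : ℕ) : sgenProd cs a 0 = 1 := rfl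

theorem sgenProd_succ (a L : ℕ) : sgenProd cs a (L + 1) = sgenProd cs a L * sgen cs (a + L) := by
  simp [sgenProd, List.range_succ]

theorem sgenProd_succ' (a L : ℕ) : sgenProd cs a (L + 1) = sgen cs a * sgenProd cs (a + 1) L := by
  simp [sgenProd, List.range_succ_eq_map, Function.comp_def, Nat.add_assoc, Nat.add_comm 1]

theorem commute_sgenProd {g : W} {a L : ℕ} (h : ∀ i < L, Commute g (sgen cs (a + i))) :
    Commute g (sgenProd cs a L) :=
  Commute.list_prod_right _ _ fun _ hx => by
    obtain ⟨i, hi, rfl⟩ := List.mem_map.1 hx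
    exact h i (List.mem_range.1 hi)

theorem sgenProd_mul_sgen {a L j : ℕ} (ha : 1 ≤ a) (hj : a ≤ j) (hjL : j + 2 ≤ a + L)
    (hn : a + L ≤ n) : sgenProd cs a L * sgen cs j = sgen cs (j + 1) * sgenProd cs a L := by
  induction L with
  | zero => omega
  | succ L ih =>
    rw [sgenProd_succ]
    rcases Nat.lt_or_ge (j + 2) (a + L + 1) with hlt | hge
    · rw [mul_assoc, ← (sgen_commute cs (by omega : j + 2 ≤ a + L)).eq, ← mul_assoc,
        ih (by omega) (by omega), mul_assoc]
    · obtain ⟨L, rfl⟩ : ∃ L', L = L' + 1 := ⟨L - 1, by omega⟩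
      obtain rfl : j = a + L := by omega
      have hc : Commute (sgen cs (a + L + 1)) (sgenProd cs a L) :=
        commute_sgenProd cs fun i hi => (sgen_commute cs (by omega)).symm
      rw [sgenProd_succ, show a + (L + 1) = a + L + 1 by omega]
      calc sgenProd cs a L * sgen cs (a + L) * sgen cs (a + L + 1) * sgen cs (a + L)
          = sgenProd cs a L * (sgen cs (a + L) * sgen cs (a + L + 1) * sgen cs (a + L)) := by
            simp only [mul_assoc]
        _ = sgenProd cs a L * sgen cs (a + L + 1) * (sgen cs (a + L) * sgen cs (a + L + 1)) := by
            rw [sgen_braid cs (by omega) (by omega)]; simp only [mul_assoc]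
        _ = sgen cs (a + L + 1) * (sgenProd cs a L * sgen cs (a + L) * sgen cs (a + L + 1)) := by
            rw [← hc.eq]; simp only [mul_assoc]

theorem sgenProd_pow_mul_sgen {a L p : ℕ} (ha : 1 ≤ a) (hp : p < L) (hn : a + L ≤ n) :
    sgenProd cs a L ^ p * sgen cs a = sgen cs (a + p) * sgenProd cs a L ^ p := by
  induction p with
  | zero => simp
  | succ p ih =>
    rw [pow_succ', mul_assoc, ih (by omega), ← mul_assoc,
      sgenProd_mul_sgen cs ha (by omega) (by omega) hn, mul_assoc, ← Nat.add_assoc]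

theorem sgenProd_mul_pow {a L p : ℕ} (ha : 1 ≤ a) (hp : p ≤ L) (hn : a + L ≤ n) :
    sgenProd cs a p * sgenProd cs a L ^ p = (sgen cs a * sgenProd cs a L) ^ p := by
  induction p with
  | zero => simp [sgenProd_zero]
  | succ p ih =>
    calc sgenProd cs a (p + 1) * sgenProd cs a L ^ (p + 1)
        = sgenProd cs a p * (sgen cs (a + p) * sgenProd cs a L ^ p) * sgenProd cs a L := by
          rw [sgenProd_succ, pow_succ]; simp only [mul_assoc]
      _ = sgenProd cs a p * sgenProd cs a L ^ p * (sgen cs a * sgenProd cs a L) := by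
          rw [← sgenProd_pow_mul_sgen cs ha hp hn]; simp only [mul_assoc]
      _ = (sgen cs a * sgenProd cs a L) ^ (p + 1) := by rw [ih (by omega), pow_succ]

theorem sgenProd_pow_succ {a L : ℕ} (ha : 1 ≤ a) (hn : a + L ≤ n) :
    sgenProd cs a L ^ (L + 1) = 1 := by
  induction L generalizing a with
  | zero => simp [sgenProd_zero]
  | succ L ih =>
    have hshift : sgen cs a * sgenProd cs a (L + 1) = sgenProd cs (a + 1) L := by
      rw [sgenProd_succ', sgen_mul_self_mul]
    rw [pow_succ', sgenProd_mul_pow cs ha le_rfl hn, hshift,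
      ih (by omega) (by omega)]

theorem tgen_eq_sgenProd (k : ℕ) : tgen cs k = sgenProd cs 1 (k - 1) := by
  simp only [tgen, sgenProd, Nat.add_comm 1]

theorem tgen_pow_self {k : ℕ} (hk : k ≤ n) : tgen cs k ^ k = 1 := by
  cases k with
  | zero => exact pow_zero _
  | succ k => rw [tgen_eq_sgenProd]; exact sgenProd_pow_succ cs le_rfl (by omega)

theorem tgen_zpow_add_self {k : ℕ} (hk : k ≤ n) (I : ℤ) :
    tgen cs k ^ ((k : ℤ) + I) = tgen cs k ^ I := by
  rw [zpow_add, zpow_natCast, tgen_pow_self cs hk, one_mul]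

theorem tgen_mul_sgen {j k : ℕ} (hj : 1 ≤ j) (hjk : j + 2 ≤ k) (hk : k ≤ n) :
    tgen cs k * sgen cs j = sgen cs (j + 1) * tgen cs k := by
  rw [tgen_eq_sgenProd]
  exact sgenProd_mul_sgen cs le_rfl hj (by omega) (by omega)

theorem tau_eq_sgen_mul_tgen {k : ℕ} (hk : 1 ≤ k) : tau cs k = sgen cs 0 * tgen cs k := by
  obtain ⟨k, rfl⟩ : ∃ k', k = k' + 1 := ⟨k - 1, by omega⟩
  simp [tau, tgen, List.range_succ_eq_map, Function.comp_def]

/-- In the signed-permutation model of `W`, `signFlip cs m` changes the sign of the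
coordinate `m + 1`, and `signFlips cs S` the signs of the first `S` coordinates. -/
def signFlip : ℕ → W
  | 0 => sgen cs 0
  | m + 1 => sgen cs (m + 1) * signFlip m * sgen cs (m + 1)

def signFlips (S : ℕ) : W := ((List.range S).map (signFlip cs)).prod

theorem signFlips_zero : signFlips cs 0 = 1 := rfl

theorem signFlips_succ (S : ℕ) : signFlips cs (S + 1) = signFlips cs S * signFlip cs S := by
  simp [signFlips, List.range_succ]

theorem signFlips_succ' (S : ℕ) :
    signFlips cs (S + 1) = sgen cs 0 * ((List.range S).map fun m => signFlip cs (m + 1)).prod := by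
  simp [signFlips, List.range_succ_eq_map, Function.comp_def, signFlip]

theorem tgen_mul_signFlip {m k : ℕ} (hmk : m + 2 ≤ k) (hk : k ≤ n) :
    tgen cs k * signFlip cs m = signFlip cs (m + 1) * tgen cs k := by
  induction m with
  | zero =>
    obtain ⟨k, rfl⟩ : ∃ k', k = k' + 1 := ⟨k - 1, by omega⟩
    have hc : Commute (sgen cs 0) (sgenProd cs (1 + 1) (k - 1)) :=
      commute_sgenProd cs fun i _ => sgen_commute cs (by omega)
    rw [tgen_eq_sgenProd, show k + 1 - 1 = (k - 1) + 1 by omega, sgenProd_succ']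
    simp only [signFlip, mul_assoc, ← hc.eq, sgen_mul_self_mul]
  | succ m ih =>
    calc tgen cs k * signFlip cs (m + 1)
        = tgen cs k * sgen cs (m + 1) * signFlip cs m * sgen cs (m + 1) := by
          simp only [signFlip, mul_assoc]
      _ = sgen cs (m + 2) * (tgen cs k * signFlip cs m) * sgen cs (m + 1) := by
          rw [tgen_mul_sgen cs (by omega) hmk hk]; simp only [mul_assoc]
      _ = sgen cs (m + 2) * signFlip cs (m + 1) * (tgen cs k * sgen cs (m + 1)) := by
          rw [ih (by omega)]; simp only [mul_assoc]
      _ = signFlip cs (m + 2) * tgen cs k := by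
          rw [tgen_mul_sgen cs (by omega) hmk hk]; simp only [signFlip, mul_assoc]

theorem tgen_mul_signFlips {S k : ℕ} (hSk : S < k) (hk : k ≤ n) :
    tgen cs k * signFlips cs S =
      ((List.range S).map fun m => signFlip cs (m + 1)).prod * tgen cs k := by
  induction S with
  | zero => simp [signFlips_zero]
  | succ S ih =>
    rw [signFlips_succ, ← mul_assoc, ih (by omega), mul_assoc, tgen_mul_signFlip cs hSk hk,
      List.range_succ, List.map_append, List.prod_append]
    simp [mul_assoc]

theorem tau_mul_signFlips {S k : ℕ} (hSk : S < k) (hk : k ≤ n) :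
    tau cs k * signFlips cs S = signFlips cs (S + 1) * tgen cs k := by
  rw [tau_eq_sgen_mul_tgen cs (by omega), mul_assoc, tgen_mul_signFlips cs hSk hk, signFlips_succ',
    mul_assoc]

theorem tau_pow_mul_signFlips {a S k : ℕ} (hSk : S + a ≤ k) (hk : k ≤ n) :
    tau cs k ^ a * signFlips cs S = signFlips cs (S + a) * tgen cs k ^ a := by
  induction a with
  | zero => simp
  | succ a ih =>
    rw [pow_succ', mul_assoc, ih (by omega), ← mul_assoc, tau_mul_signFlips cs (by omega) hk,
      pow_succ', ← Nat.add_assoc, mul_assoc]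

theorem tau_zpow_mul_signFlips {S T k : ℕ} {I : ℤ} (hST : (T : ℤ) = S + I) (hS : S ≤ k)
    (hT : T ≤ k) (hk : k ≤ n) :
    tau cs k ^ I * signFlips cs S = signFlips cs T * tgen cs k ^ I := by
  rcases le_or_gt 0 I with hI | hI
  · lift I to ℕ using hI
    obtain rfl : T = S + I := by omega
    simpa using tau_pow_mul_signFlips cs hT hk
  · obtain ⟨a, rfl⟩ : ∃ a : ℕ, I = -a := ⟨(-I).toNat, by omega⟩
    obtain rfl : S = T + a := by omega
    have h := tau_pow_mul_signFlips cs (a := a) hS hk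
    rw [zpow_neg, zpow_neg, zpow_natCast, zpow_natCast, inv_mul_eq_iff_eq_mul, ← mul_assoc, h,
      mul_inv_cancel_right]

end Generators

theorem list_prod_map_finRange_mul_eq {M : Type*} [Monoid M] {m : ℕ} (a b : Fin m → M)
    (D : ℕ → M) (h : ∀ j : Fin m, a j * D (j + 1) = D j * b j) :
    ((List.finRange m).map a).prod * D m = D 0 * ((List.finRange m).map b).prod := by
  induction m generalizing D with
  | zero => simp
  | succ m ih =>
    have ih' := ih (fun j => a j.succ) (fun j => b j.succ) (fun r => D (r + 1))
      fun j => h j.succ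
    simp only [List.finRange_succ, List.map_cons, List.map_map, List.prod_cons,
      Function.comp_def, zero_add] at ih' ⊢
    rw [mul_assoc, ih', ← mul_assoc, show a 0 * D 1 = D 0 * b 0 from h 0, mul_assoc]

def tailSum {m : ℕ} (i : Fin m → ℤ) (r : ℕ) : ℤ :=
  ∑ j ∈ Finset.univ.filter (fun j : Fin m => r ≤ (j : ℕ)), i j

theorem tailSum_zero {m : ℕ} (i : Fin m → ℤ) : tailSum i 0 = ∑ j, i j := by
  simp [tailSum]

theorem tailSum_of_le {m r : ℕ} (i : Fin m → ℤ) (h : m ≤ r) : tailSum i r = 0 := by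
  refine Finset.sum_eq_zero fun j hj => ?_
  have := (Finset.mem_filter.1 hj).2
  omega

theorem tailSum_eq_add {m : ℕ} (i : Fin m → ℤ) (j : Fin m) :
    tailSum i j = i j + tailSum i (j + 1) := by
  have : Finset.univ.filter (fun l : Fin m => (j : ℕ) ≤ l) =
      insert j (Finset.univ.filter fun l : Fin m => (j : ℕ) + 1 ≤ l) := by
    ext l; simp [Fin.ext_iff]; omega
  rw [tailSum, this, Finset.sum_insert (by simp)]
  rfl

namespace IsAdmissible

variable {cs : CoxeterSystem (BCoxeterMatrix n) W} {w : W} {m : ℕ} {k : Fin m → ℕ}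
  {i : Fin m → ℤ}

theorem tailSum_nonneg (h : IsAdmissible cs w m k i) (r : ℕ) : 0 ≤ tailSum i r := by
  rcases Nat.eq_zero_or_pos r with rfl | hr
  · rw [tailSum_zero, h.total]
  · rcases lt_or_ge r m with hrm | hrm
    · exact (h.partialSum r hr hrm).1
    · rw [tailSum_of_le i hrm]

theorem tailSum_succ_le (h : IsAdmissible cs w m k i) (j : Fin m) :
    tailSum i (j + 1) ≤ k j := by
  rcases lt_or_ge ((j : ℕ) + 1) m with hj | hj
  · exact (h.partialSum _ (by omega) hj).2
  · rw [tailSum_of_le i hj]; positivity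

theorem tailSum_le (h : IsAdmissible cs w m k i) (j : Fin m) : tailSum i j ≤ k j := by
  rcases j with ⟨_ | r, hr⟩
  · rw [tailSum_zero, h.total]; positivity
  · calc tailSum i (r + 1) ≤ k ⟨r, by omega⟩ := (h.partialSum _ (by omega) hr).2
      _ ≤ k ⟨r + 1, hr⟩ := by exact_mod_cast (h.mono (Fin.mk_lt_mk.2 (Nat.lt_succ_self r))).le

theorem tau_zpow_mul_signFlips_tailSum (h : IsAdmissible cs w m k i) (j : Fin m) :
    tau cs (k j) ^ i j * signFlips cs (tailSum i (j + 1)).toNat =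
      signFlips cs (tailSum i j).toNat *
        tgen cs (k j) ^ (if 0 ≤ i j then i j else (k j : ℤ) + i j) := by
  have hσ : ∀ r, ((tailSum i r).toNat : ℤ) = tailSum i r :=
    fun r => Int.toNat_of_nonneg (h.tailSum_nonneg r)
  rw [apply_ite (tgen cs (k j) ^ ·), tgen_zpow_add_self cs (h.le_n j), ite_self]
  refine tau_zpow_mul_signFlips cs ?_ ?_ ?_ (h.le_n j)
  · rw [hσ, hσ, tailSum_eq_add]; ring
  · zify; rw [hσ]; exact h.tailSum_succ_le j
  · zify; rw [hσ]; exact h.tailSum_le j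

end IsAdmissible

/-- If `w = τ_{k_1}^{i_{k_1}} ⋯ τ_{k_m}^{i_{k_m}}` is an `Ṡ_n`-admissible presentation
then `w = t_{k_1}^{i'_{k_1}} ⋯ t_{k_m}^{i'_{k_m}}`, where `i'_{k_j} = i_{k_j}` if
`i_{k_j} ≥ 0` and `i'_{k_j} = k_j + i_{k_j}` if `i_{k_j} < 0`. -/
theorem admissible_eq_t_prod (cs : CoxeterSystem (BCoxeterMatrix n) W) (w : W)
    (m : ℕ) (k : Fin m → ℕ) (i : Fin m → ℤ) (h : IsAdmissible cs w m k i) :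
    w = ((List.finRange m).map (fun j =>
      tgen cs (k j) ^ (if 0 ≤ i j then i j else (k j : ℤ) + i j))).prod := by
  have := list_prod_map_finRange_mul_eq _ _
    (fun r => signFlips cs (tailSum i r).toNat) h.tau_zpow_mul_signFlips_tailSum
  rw [tailSum_zero, h.total, tailSum_of_le i le_rfl] at this
  simpa [signFlips_zero, ← h.prod_eq] using this
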